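/- arXiv:1412.4193 — 2 statements merged into one kernel-verified Lean document; each statement's English description precedes it below -/
import Mathlib

section
/- Let δ > 0, B > 0, let H_N be an N×N real symmetric matrix with ‖H_N‖ ≤ B, and let θ be a real number with 0 < |θ| ≤ B. Suppose z_θ is a real number with m_N(z_θ) = 1/θ and either z_θ ≥ λ_1(H_N) + 2δ or z_θ ≤ λ_N(H_N) − 2δ. Then for every real ξ with |ξ| ≤ δ, one has |ξ|/(4B²) ≤ |m_N(z_θ + ξ) − 1/θ| ≤ 4|ξ|/δ². -/
open MeasureTheory Matrix Filter

/-- Operator norm (ℓ²→ℓ²) of a real matrix. -/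
noncomputable def opNorm {m n : ℕ} (A : Matrix (Fin m) (Fin n) ℝ) : ℝ :=
  ‖LinearMap.toContinuousLinearMap (Matrix.toEuclideanLin A)‖

/-- The eigenvalues of a Hermitian matrix, listed in decreasing order (with multiplicity);
junk value `0` if the matrix is not Hermitian. -/
noncomputable def eigDesc {𝕜 : Type*} [RCLike 𝕜] {N : ℕ} (A : Matrix (Fin N) (Fin N) 𝕜) :
    Fin N → ℝ :=
  if h : A.IsHermitian then fun k => h.eigenvalues (Tuple.sort h.eigenvalues k.rev) else 0

/-!
Write `a_k = z - λ_k`, so that `|a_k| ≥ 2δ` for every `k`. The resolvent identity gives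
`m_N(z + ξ) - m_N(z) = -ξ · 𝔼_k 1 / ((a_k + ξ) a_k)`, and since `|ξ| ≤ |a_k| / 2` each
denominator lies between `a_k² / 2 ≥ 2δ²` and `3 a_k² / 2`. The upper bound follows at once;
for the lower bound, Cauchy–Schwarz gives `𝔼_k 1 / a_k² ≥ (𝔼_k 1 / a_k)² = 1 / θ² ≥ 1 / B²`.
-/

open Finset
open scoped BigOperators

lemma eigDesc_antitone {𝕜 : Type*} [RCLike 𝕜] {N : ℕ} (A : Matrix (Fin N) (Fin N) 𝕜) :
    Antitone (eigDesc A) := by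
  unfold eigDesc
  split_ifs with hA
  · exact fun i j hij => Tuple.monotone_sort hA.eigenvalues (Fin.rev_le_rev.mpr hij)
  · exact antitone_const

lemma le_abs_sub_of_antitone {ι : Type*} [Preorder ι] {f : ι → ℝ} (hf : Antitone f)
    {i j : ι} (hi : IsBot i) (hj : IsTop j) {c z : ℝ} (h : f i + c ≤ z ∨ z ≤ f j - c) (k : ι) :
    c ≤ |z - f k| := by
  rcases h with h | h
  · have := hf (hi k)
    exact le_abs.mpr (Or.inl (by linarith))
  · have := hf (hj k)
    exact le_abs.mpr (Or.inr (by linarith))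

lemma one_div_mul_sum_eq_expect {K : Type*} [Semifield K] [CharZero K] {N : ℕ} (f : Fin N → K) :
    1 / (N : K) * ∑ k, f k = 𝔼 k, f k := by
  rw [Fintype.expect_eq_sum_div_card, Fintype.card_fin, one_div_mul_eq_div]

lemma add_mul_self_mem_Icc {a ξ δ : ℝ} (ha : 2 * δ ≤ |a|) (hξ : |ξ| ≤ δ) :
    (a + ξ) * a ∈ Set.Icc (2 * δ ^ 2) (3 * a ^ 2 / 2) := by
  have hξa : |ξ * a| ≤ a ^ 2 / 2 := by
    rw [abs_mul, ← sq_abs a]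
    nlinarith [abs_nonneg a, abs_nonneg ξ]
  have hδa : (2 * δ) ^ 2 ≤ a ^ 2 := by
    rw [← sq_abs a]
    exact pow_le_pow_left₀ (by linarith [abs_nonneg ξ]) ha 2
  constructor <;> nlinarith [abs_le.mp hξa]

section Resolvent

variable {ι : Type*} [Fintype ι] {a : ι → ℝ} {δ ξ : ℝ}

lemma expect_one_div_add_sub_expect_one_div (ha : ∀ i, a i ≠ 0) (haξ : ∀ i, a i + ξ ≠ 0) :
    𝔼 i, 1 / (a i + ξ) - 𝔼 i, 1 / a i = -ξ * 𝔼 i, 1 / ((a i + ξ) * a i) := by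
  rw [← expect_sub_distrib, mul_expect]
  refine expect_congr rfl fun i _ => ?_
  field_simp [ha i, haξ i]
  ring

lemma abs_expect_one_div_add_sub_eq (hδ : 0 < δ) (ha : ∀ i, 2 * δ ≤ |a i|) (hξ : |ξ| ≤ δ) :
    |𝔼 i, 1 / (a i + ξ) - 𝔼 i, 1 / a i| = |ξ| * 𝔼 i, 1 / ((a i + ξ) * a i) := by
  have hpos i : 0 < (a i + ξ) * a i :=
    lt_of_lt_of_le (by positivity) (add_mul_self_mem_Icc (ha i) hξ).1
  rw [expect_one_div_add_sub_expect_one_div (fun i => right_ne_zero_of_mul (hpos i).ne')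
    (fun i => left_ne_zero_of_mul (hpos i).ne'), abs_mul, abs_neg,
    abs_of_nonneg (expect_nonneg fun i _ => (one_div_pos.mpr (hpos i)).le)]

lemma abs_expect_one_div_add_sub_le [Nonempty ι] (hδ : 0 < δ) (ha : ∀ i, 2 * δ ≤ |a i|)
    (hξ : |ξ| ≤ δ) :
    |𝔼 i, 1 / (a i + ξ) - 𝔼 i, 1 / a i| ≤ |ξ| / (2 * δ ^ 2) := by
  rw [abs_expect_one_div_add_sub_eq hδ ha hξ, div_eq_mul_one_div]
  gcongr
  refine expect_le univ_nonempty fun i _ => ?_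
  exact one_div_le_one_div_of_le (by positivity) (add_mul_self_mem_Icc (ha i) hξ).1

lemma le_abs_expect_one_div_add_sub [Nonempty ι] (hδ : 0 < δ) (ha : ∀ i, 2 * δ ≤ |a i|)
    (hξ : |ξ| ≤ δ) :
    2 / 3 * |ξ| * (𝔼 i, 1 / a i) ^ 2 ≤ |𝔼 i, 1 / (a i + ξ) - 𝔼 i, 1 / a i| := by
  rw [abs_expect_one_div_add_sub_eq hδ ha hξ, mul_comm (2 / 3 : ℝ), mul_assoc]
  gcongr
  have hcs : (𝔼 i, 1 / a i) ^ 2 ≤ 𝔼 i, (1 / a i) ^ 2 := by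
    simpa using expect_mul_sq_le_sq_mul_sq univ (fun i => 1 / a i) fun _ => (1 : ℝ)
  refine (mul_le_mul_of_nonneg_left hcs (by norm_num)).trans ?_
  rw [mul_expect]
  refine expect_le_expect fun i _ => ?_
  have hmem := add_mul_self_mem_Icc (ha i) hξ
  have hpos : 0 < (a i + ξ) * a i := lt_of_lt_of_le (by positivity) hmem.1
  calc 2 / 3 * (1 / a i) ^ 2 = 1 / (3 * a i ^ 2 / 2) := by
        field_simp [right_ne_zero_of_mul hpos.ne']
    _ ≤ 1 / ((a i + ξ) * a i) := one_div_le_one_div_of_le hpos hmem.2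

end Resolvent

theorem stmt14 (δ B : ℝ) (hδ : 0 < δ) (N : ℕ) (hN : 1 ≤ N)
    (H : Matrix (Fin N) (Fin N) ℝ)
    (θ : ℝ) (hθ0 : θ ≠ 0) (hθB : |θ| ≤ B)
    (z : ℝ) (hz : (1 / (N : ℝ)) * ∑ k, 1 / (z - eigDesc H k) = 1 / θ)
    (hsep : eigDesc H ⟨0, by omega⟩ + 2 * δ ≤ z ∨ z ≤ eigDesc H ⟨N - 1, by omega⟩ - 2 * δ)
    (ξ : ℝ) (hξ : |ξ| ≤ δ) :
    |ξ| / (4 * B ^ 2) ≤ |(1 / (N : ℝ)) * (∑ k, 1 / (z + ξ - eigDesc H k)) - 1 / θ| ∧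
    |(1 / (N : ℝ)) * (∑ k, 1 / (z + ξ - eigDesc H k)) - 1 / θ| ≤ 4 * |ξ| / δ ^ 2 := by
  have : NeZero N := ⟨by omega⟩
  have hgap : ∀ k, 2 * δ ≤ |z - eigDesc H k| :=
    le_abs_sub_of_antitone (eigDesc_antitone H) (fun k => Nat.zero_le k)
      (fun k => Nat.le_sub_one_of_lt k.isLt) hsep
  have hθB' : θ ^ 2 ≤ B ^ 2 := sq_le_sq.mpr (hθB.trans (le_abs_self B))
  simp only [one_div_mul_sum_eq_expect, add_sub_right_comm z ξ] at hz ⊢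
  rw [← hz]
  constructor
  · calc |ξ| / (4 * B ^ 2) ≤ |ξ| / (4 * θ ^ 2) := by gcongr
      _ ≤ 2 / 3 * |ξ| * (1 / θ) ^ 2 := by
          rw [div_pow, one_pow, mul_one_div, div_le_div_iff₀ (by positivity) (by positivity)]
          nlinarith [abs_nonneg ξ, sq_nonneg θ]
      _ = 2 / 3 * |ξ| * (𝔼 k, 1 / (z - eigDesc H k)) ^ 2 := by rw [hz]
      _ ≤ _ := le_abs_expect_one_div_add_sub hδ hgap hξ
  · calc _ ≤ |ξ| / (2 * δ ^ 2) := abs_expect_one_div_add_sub_le hδ hgap hξ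
      _ ≤ 4 * |ξ| / δ ^ 2 := by
          rw [div_le_div_iff₀ (by positivity) (by positivity)]
          nlinarith [abs_nonneg ξ, sq_nonneg δ]
end

section
/- Let 1 ≤ M ≤ N be integers, let H be an N×N real symmetric matrix, let Ũ be an N×M real matrix with orthonormal columns (ŨᵀŨ = I_M), and let z, z' be real numbers with λ_1(H) < z' < z. Then the M×M real symmetric matrix Ũᵀ( (z'I_N − H)^{−1} − (zI_N − H)^{−1} )Ũ, which equals (z − z') Ũᵀ (z'I_N − H)^{−1} (zI_N − H)^{−1} Ũ, is positive definite. Consequently, for any invertible M×M real diagonal matrix P̃_M, each ordered eigenvalue of D(z) = P̃_M^{−1} − Ũᵀ(zI_N − H)^{−1}Ũ is a strictly increasing function of z on (λ_1(H), ∞). -/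
open MeasureTheory Matrix Filter

/-!
Write `R(z) = z • 1 - H`; it is positive definite for `z > λ₁(H)`. The resolvent identity gives
`R(z')⁻¹ - R(z)⁻¹ = (z - z') • (R(z) * R(z'))⁻¹`, and
`R(z) * R(z') = R(z')ᴴ * R(z') + (z - z') • R(z')` is positive definite; compressing by `U`, whose
columns are orthonormal, preserves definiteness. Hence `D(z) - D(z')` is positive definite, and each
ordered eigenvalue strictly increases by the Courant–Fischer dimension count: the span of the top
`k + 1` eigenvectors of `D(z')` meets the span of the bottom `M - k` eigenvectors of `D(z)` in a
nonzero vector.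
-/

open Module Submodule
open scoped RealInnerProductSpace

section Rayleigh

variable {ι E : Type*} [Fintype ι] [NormedAddCommGroup E] [InnerProductSpace ℝ E]
  (b : OrthonormalBasis ι ℝ E) {T : E →ₗ[ℝ] E} {μ : ι → ℝ}

lemma OrthonormalBasis.inner_map_self_eq_sum (hT : ∀ i, T (b i) = μ i • b i) (x : E) :
    ⟪x, T x⟫ = ∑ i, μ i * ⟪b i, x⟫ ^ 2 := by
  have hTx : T x = ∑ i, (μ i * ⟪b i, x⟫) • b i := by
    conv_lhs => rw [← b.sum_repr' x]
    simp only [map_sum, _root_.map_smul, hT, smul_smul, mul_comm]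
  simp only [hTx, inner_sum, real_inner_smul_right, real_inner_comm x, pow_two, mul_assoc]

lemma OrthonormalBasis.inner_eq_zero_of_mem_span {s : Set ι} {x : E}
    (hx : x ∈ span ℝ (b '' s)) {i : ι} (hi : i ∉ s) : ⟪b i, x⟫ = 0 := by
  have hle : span ℝ (b '' s) ≤ (ℝ ∙ b i)ᗮ := by
    refine span_le.mpr ?_
    rintro _ ⟨j, hj, rfl⟩
    exact mem_orthogonal_singleton_iff_inner_right.mpr
      (b.orthonormal.2 (ne_of_mem_of_not_mem hj hi).symm)
  exact mem_orthogonal_singleton_iff_inner_right.mp (hle hx)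

lemma OrthonormalBasis.inner_map_self_le_of_mem_span (hT : ∀ i, T (b i) = μ i • b i)
    {s : Set ι} {c : ℝ} (hs : ∀ i ∈ s, μ i ≤ c) {x : E} (hx : x ∈ span ℝ (b '' s)) :
    ⟪x, T x⟫ ≤ c * ‖x‖ ^ 2 := by
  rw [b.inner_map_self_eq_sum hT, ← b.sum_sq_inner_right, Finset.mul_sum]
  refine Finset.sum_le_sum fun i _ => ?_
  by_cases hi : i ∈ s
  · exact mul_le_mul_of_nonneg_right (hs i hi) (sq_nonneg _)
  · simp [b.inner_eq_zero_of_mem_span hx hi]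

lemma OrthonormalBasis.le_inner_map_self_of_mem_span (hT : ∀ i, T (b i) = μ i • b i)
    {s : Set ι} {c : ℝ} (hs : ∀ i ∈ s, c ≤ μ i) {x : E} (hx : x ∈ span ℝ (b '' s)) :
    c * ‖x‖ ^ 2 ≤ ⟪x, T x⟫ := by
  have := b.inner_map_self_le_of_mem_span (T := -T) (μ := -μ) (by simp [hT])
    (fun i hi => neg_le_neg (hs i hi)) hx
  simp only [LinearMap.neg_apply, inner_neg_right] at this
  linarith

lemma OrthonormalBasis.finrank_span_image (s : Set ι) [Fintype s] :
    finrank ℝ (span ℝ (b '' s)) = Fintype.card s := by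
  rw [Set.image_eq_range]
  exact finrank_span_eq_card (b.orthonormal.linearIndependent.comp _ Subtype.val_injective)

end Rayleigh

lemma Submodule.exists_mem_inf_ne_zero_of_finrank_lt {K V : Type*} [DivisionRing K]
    [AddCommGroup V] [Module K V] [FiniteDimensional K V] {S T : Submodule K V}
    (h : finrank K V < finrank K S + finrank K T) : ∃ x ∈ S ⊓ T, x ≠ 0 := by
  refine exists_mem_ne_zero_of_ne_bot fun hbot => ?_
  have := finrank_sup_add_finrank_inf_eq S T
  rw [hbot, finrank_bot] at this
  have := (S ⊔ T).finrank_le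
  omega

lemma eigenvalue_lt_of_inner_map_self_lt {E : Type*} [NormedAddCommGroup E]
    [InnerProductSpace ℝ E] {m : ℕ} (b c : OrthonormalBasis (Fin m) ℝ E) {S T : E →ₗ[ℝ] E}
    {μ ν : Fin m → ℝ} (hμ : Antitone μ) (hν : Antitone ν)
    (hS : ∀ i, S (b i) = μ i • b i) (hT : ∀ i, T (c i) = ν i • c i)
    (hST : ∀ x ≠ 0, ⟪x, S x⟫ < ⟪x, T x⟫) (k : Fin m) : μ k < ν k := by
  have := b.toBasis.finiteDimensional_of_finite
  have hdim : finrank ℝ E < finrank ℝ (span ℝ (b '' Set.Iic k))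
      + finrank ℝ (span ℝ (c '' Set.Ici k)) := by
    rw [b.finrank_span_image, c.finrank_span_image, finrank_eq_card_basis b.toBasis,
      Fintype.card_fin, Fintype.card_Iic, Fintype.card_Ici, Fin.card_Iic, Fin.card_Ici]
    omega
  obtain ⟨x, hx, hx0⟩ := exists_mem_inf_ne_zero_of_finrank_lt hdim
  have hnorm : 0 < ‖x‖ ^ 2 := by positivity
  have lower := b.le_inner_map_self_of_mem_span hS (fun i hi => hμ hi) hx.1
  have upper := c.inner_map_self_le_of_mem_span hT (fun i hi => hν hi) hx.2
  exact lt_of_mul_lt_mul_right ((lower.trans_lt (hST x hx0)).trans_le upper) hnorm.le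

section Matrix

variable {m : ℕ} {A B : Matrix (Fin m) (Fin m) ℝ}

lemma eigDesc_of_isHermitian (hA : A.IsHermitian) (k : Fin m) :
    eigDesc A k = hA.eigenvalues (Tuple.sort hA.eigenvalues k.rev) := by
  rw [eigDesc, dif_pos hA]

lemma eigDesc_antitone_s19 (hA : A.IsHermitian) : Antitone (eigDesc A) := by
  intro i j hij
  rw [eigDesc_of_isHermitian hA, eigDesc_of_isHermitian hA]
  exact Tuple.monotone_sort hA.eigenvalues (Fin.rev_le_rev.mpr hij)

lemma exists_orthonormalBasis_toEuclideanLin_eq_eigDesc_smul (hA : A.IsHermitian) :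
    ∃ b : OrthonormalBasis (Fin m) ℝ (EuclideanSpace ℝ (Fin m)),
      ∀ i, toEuclideanLin A (b i) = eigDesc A i • b i := by
  refine ⟨hA.eigenvectorBasis.reindex (Fin.revPerm.trans (Tuple.sort hA.eigenvalues)).symm,
    fun i => ?_⟩
  rw [OrthonormalBasis.reindex_apply, Equiv.symm_symm, eigDesc_of_isHermitian hA,
    toLpLin_apply, hA.mulVec_eigenvectorBasis]
  rfl

lemma dotProduct_mulVec_eq_inner (A : Matrix (Fin m) (Fin m) ℝ) (x : Fin m → ℝ) :
    star x ⬝ᵥ A *ᵥ x = ⟪WithLp.toLp 2 x, toEuclideanLin A (WithLp.toLp 2 x)⟫ := by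
  rw [EuclideanSpace.inner_eq_star_dotProduct, dotProduct_comm]
  rfl

theorem eigDesc_lt_eigDesc_of_posDef (hA : A.IsHermitian) (hAB : (B - A).PosDef) (k : Fin m) :
    eigDesc A k < eigDesc B k := by
  have hB : B.IsHermitian := by simpa using hA.add hAB.isHermitian
  obtain ⟨b, hb⟩ := exists_orthonormalBasis_toEuclideanLin_eq_eigDesc_smul hA
  obtain ⟨c, hc⟩ := exists_orthonormalBasis_toEuclideanLin_eq_eigDesc_smul hB
  refine eigenvalue_lt_of_inner_map_self_lt b c (eigDesc_antitone_s19 hA) (eigDesc_antitone_s19 hB)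
    hb hc (fun x hx => ?_) k
  have := hAB.dotProduct_mulVec_pos (x := x.ofLp) (by simpa using hx)
  rw [dotProduct_mulVec_eq_inner, map_sub, LinearMap.sub_apply, inner_sub_right] at this
  simpa using this

lemma posDef_smul_one_sub (hA : A.IsHermitian) (h0 : 0 < m) {c : ℝ}
    (hc : eigDesc A ⟨0, h0⟩ < c) : (c • 1 - A).PosDef := by
  obtain ⟨b, hb⟩ := exists_orthonormalBasis_toEuclideanLin_eq_eigDesc_smul hA
  refine .of_dotProduct_mulVec_pos ((isHermitian_one.smul (IsSelfAdjoint.all c)).sub hA)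
    fun x hx => ?_
  have hle := b.inner_map_self_le_of_mem_span hb (s := Set.univ)
    (fun i _ => eigDesc_antitone_s19 hA (show ⟨0, h0⟩ ≤ i from Nat.zero_le _))
    (x := WithLp.toLp 2 x)
    (by rw [Set.image_univ, ← b.coe_toBasis, b.toBasis.span_eq]; exact mem_top)
  have hnorm : 0 < ‖WithLp.toLp 2 x‖ ^ 2 := pow_pos (norm_pos_iff.mpr (by simpa using hx)) 2
  rw [dotProduct_mulVec_eq_inner]
  simp only [map_sub, _root_.map_smul, toLpLin_one, LinearMap.sub_apply, LinearMap.smul_apply,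
    LinearMap.id_apply, inner_sub_right, real_inner_smul_right, real_inner_self_eq_norm_sq]
  nlinarith

end Matrix

lemma Matrix.PosDef.add_smul_one_mul_self {n : Type*} [Fintype n] [DecidableEq n]
    {B : Matrix n n ℝ} (hB : B.PosDef) {c : ℝ} (hc : 0 ≤ c) : ((B + c • 1) * B).PosDef := by
  have hBB : (Bᴴ * 1 * B).PosDef :=
    PosDef.one.conjTranspose_mul_mul_same (mulVec_injective_iff_isUnit.mpr hB.isUnit)
  have hsplit : (B + c • 1) * B = Bᴴ * 1 * B + c • B := by
    rw [hB.isHermitian.eq, add_mul, smul_mul, one_mul, mul_one]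
  rw [hsplit]
  exact hBB.add_posSemidef (hB.posSemidef.smul hc)

theorem stmt19 (N M : ℕ) (hM : 1 ≤ M) (hMN : M ≤ N)
    (H : Matrix (Fin N) (Fin N) ℝ) (hH : H.IsHermitian)
    (U : Matrix (Fin N) (Fin M) ℝ) (hU : Uᵀ * U = 1)
    (z z' : ℝ) (h1 : eigDesc H ⟨0, by omega⟩ < z') (h2 : z' < z) :
    (Uᵀ * ((z' • (1 : Matrix (Fin N) (Fin N) ℝ) - H)⁻¹
          - (z • (1 : Matrix (Fin N) (Fin N) ℝ) - H)⁻¹) * U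
        = (z - z') • (Uᵀ * (z' • (1 : Matrix (Fin N) (Fin N) ℝ) - H)⁻¹
            * (z • (1 : Matrix (Fin N) (Fin N) ℝ) - H)⁻¹ * U)) ∧
    (Uᵀ * ((z' • (1 : Matrix (Fin N) (Fin N) ℝ) - H)⁻¹
        - (z • (1 : Matrix (Fin N) (Fin N) ℝ) - H)⁻¹) * U).PosDef ∧
    ∀ d : Fin M → ℝ, (∀ j, d j ≠ 0) →
      ∀ k : Fin M,
        eigDesc ((Matrix.diagonal d)⁻¹
              - Uᵀ * (z' • (1 : Matrix (Fin N) (Fin N) ℝ) - H)⁻¹ * U) k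
          < eigDesc ((Matrix.diagonal d)⁻¹
              - Uᵀ * (z • (1 : Matrix (Fin N) (Fin N) ℝ) - H)⁻¹ * U) k := by
  set R' := z' • (1 : Matrix (Fin N) (Fin N) ℝ) - H
  set R := z • (1 : Matrix (Fin N) (Fin N) ℝ) - H
  have hR' : R'.PosDef := posDef_smul_one_sub hH _ h1
  have hR : R.PosDef := posDef_smul_one_sub hH _ (h1.trans h2)
  have hRR' : R - R' = (z - z') • 1 := by simp only [R, R', sub_smul]; abel
  have resolvent : R'⁻¹ - R⁻¹ = (z - z') • (R'⁻¹ * R⁻¹) := by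
    rw [inv_sub_inv (iff_of_true hR'.isUnit hR.isUnit), hRR', Matrix.mul_smul, mul_one,
      Matrix.smul_mul]
  have hU_inj : Function.Injective U.mulVec :=
    Function.LeftInverse.injective (g := Uᵀ.mulVec) fun x => by rw [mulVec_mulVec, hU, one_mulVec]
  have hpos : (Uᵀ * (R'⁻¹ - R⁻¹) * U).PosDef := by
    rw [resolvent, ← Matrix.mul_inv_rev, ← conjTranspose_eq_transpose_of_trivial,
      ← sub_add_cancel R R', hRR', add_comm]
    have hRR'_pos := hR'.add_smul_one_mul_self (sub_nonneg.mpr h2.le)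
    exact (hRR'_pos.inv.smul (sub_pos.mpr h2)).conjTranspose_mul_mul_same hU_inj
  refine ⟨by rw [resolvent]; simp only [Matrix.mul_smul, Matrix.smul_mul, Matrix.mul_assoc], hpos,
    fun d _ k => eigDesc_lt_eigDesc_of_posDef ?_ ?_ k⟩
  · exact (isHermitian_diagonal d).inv.sub <| conjTranspose_eq_transpose_of_trivial U ▸
      isHermitian_conjTranspose_mul_mul U hR'.inv.isHermitian
  · convert hpos using 1
    rw [Matrix.mul_sub, Matrix.sub_mul]
    abel
end
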